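/- Let β ∈ (−π/2, π/2) and ρ₀, ρ₁ > 0. Then k_ℍ(ρ₀, ρ₁·e^{iβ}) − k_ℍ(ρ₀, ρ₁) ≥ (1/2)·log(1/cos β), where k_ℍ denotes the hyperbolic distance in the right half-plane ℍ. -/

import Mathlib

/-!
Because `|z + w̄|² − |z − w|² = 4 Re z Re w`, the distance has the closed form
`k_ℍ(z, w) = ½ log ((|z + w̄| + |z − w|)² / (4 Re z Re w))`. For real `x > 0` the numerator
obeys `|x + w̄| + |x − w| ≥ 2 max(x, |w|)`, with equality at `w = |w|`; so passing from `|w|`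
to `w` can only enlarge the numerator, while the denominator shrinks by `Re w / |w| = cos β`.
-/

open Complex Set Real

/-- The hyperbolic (Poincaré) distance on the right half-plane
`ℍ = {z : 0 < Re z}`, given by the explicit formula
`k_ℍ(z,w) = (1/2)·log((1+|(z−w)/(z+conj w)|)/(1−|(z−w)/(z+conj w)|))`. -/
noncomputable def kH (z w : ℂ) : ℝ :=
  Real.log ((1 + ‖(z - w) / (z + (starRingEnd ℂ) w)‖) /
    (1 - ‖(z - w) / (z + (starRingEnd ℂ) w)‖)) / 2

open ComplexConjugate

theorem two_mul_max_norm_le_norm_add_add_norm_sub {E : Type*} [SeminormedAddCommGroup E]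
    [NormedSpace ℝ E] (u v : E) : 2 * max ‖u‖ ‖v‖ ≤ ‖u + v‖ + ‖u - v‖ := by
  have hu : 2 * ‖u‖ ≤ ‖u + v‖ + ‖u - v‖ := by
    have h : (u + v) + (u - v) = (2 : ℝ) • u := by rw [two_smul]; abel
    simpa only [h, norm_smul, Real.norm_two] using norm_add_le (u + v) (u - v)
  have hv : 2 * ‖v‖ ≤ ‖u + v‖ + ‖u - v‖ := by
    have h : (u + v) - (u - v) = (2 : ℝ) • v := by rw [two_smul]; abel
    simpa only [h, norm_smul, Real.norm_two] using norm_sub_le (u + v) (u - v)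
  rw [mul_max_of_nonneg _ _ zero_le_two]
  exact max_le hu hv

theorem abs_add_add_abs_sub_of_nonneg {x y : ℝ} (hx : 0 ≤ x) (hy : 0 ≤ y) :
    |x + y| + |x - y| = 2 * max x y := by
  rw [abs_of_nonneg (add_nonneg hx hy), ← max_sub_min_eq_abs', ← min_add_max x y]
  ring

theorem normSq_add_conj_sub_normSq_sub (z w : ℂ) :
    normSq (z + conj w) - normSq (z - w) = 4 * z.re * w.re := by
  simp only [normSq_apply, add_re, add_im, sub_re, sub_im, conj_re, conj_im]
  ring

theorem kH_eq_log {z w : ℂ} (hz : 0 < z.re) (hw : 0 < w.re) :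
    kH z w = Real.log ((‖z + conj w‖ + ‖z - w‖) ^ 2 / (4 * z.re * w.re)) / 2 := by
  rw [kH, norm_div]
  set a := ‖z + conj w‖
  set b := ‖z - w‖
  have hsq : a ^ 2 - b ^ 2 = 4 * z.re * w.re := by
    simpa only [a, b, Complex.sq_norm] using normSq_add_conj_sub_normSq_sub z w
  have hb : 0 ≤ b := norm_nonneg _
  have hba : b < a := lt_of_pow_lt_pow_left₀ 2 (norm_nonneg _) (by nlinarith [mul_pos hz hw])
  have ha : 0 < a := hb.trans_lt hba
  have hab : 0 < a - b := sub_pos.mpr hba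
  congr 2
  rw [← hsq, sq_sub_sq]
  field_simp

theorem kH_ofReal_norm_add_log_le {x : ℝ} (hx : 0 < x) {w : ℂ} (hw : 0 < w.re) :
    kH x ‖w‖ + Real.log (‖w‖ / w.re) / 2 ≤ kH x w := by
  have hr : 0 < ‖w‖ := hw.trans_le (re_le_norm w)
  have hmax : 2 * max x ‖w‖ ≤ ‖(x : ℂ) + conj w‖ + ‖(x : ℂ) - w‖ := by
    have h := two_mul_max_norm_le_norm_add_add_norm_sub (x : ℂ) (conj w)
    rwa [norm_conj, norm_real, Real.norm_of_nonneg hx.le, ← norm_conj ((x : ℂ) - conj w),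
      map_sub, conj_conj, conj_ofReal] at h
  rw [kH_eq_log (by simpa) (by simpa using hr), kH_eq_log (by simpa) hw]
  simp only [ofReal_re, conj_ofReal, ← ofReal_add, ← ofReal_sub, norm_real, Real.norm_eq_abs,
    abs_add_add_abs_sub_of_nonneg hx.le hr.le]
  rw [← add_div, ← Real.log_mul (by positivity) (by positivity)]
  have h : (2 * max x ‖w‖) ^ 2 / (4 * x * ‖w‖) * (‖w‖ / w.re)
      = (2 * max x ‖w‖) ^ 2 / (4 * x * w.re) := by
    field_simp
  rw [h]
  gcongr

theorem stmt_2 (β ρ₀ ρ₁ : ℝ) (hβ : β ∈ Set.Ioo (-(π/2)) (π/2))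
    (h0 : 0 < ρ₀) (h1 : 0 < ρ₁) :
    Real.log (1 / Real.cos β) / 2 ≤
      kH (ρ₀ : ℂ) ((ρ₁ : ℂ) * Complex.exp (β * Complex.I)) - kH (ρ₀ : ℂ) (ρ₁ : ℂ) := by
  set w := (ρ₁ : ℂ) * Complex.exp (β * Complex.I)
  have hnorm : ‖w‖ = ρ₁ := by
    simp [w, norm_exp_ofReal_mul_I, h1.le]
  have hre : w.re = ρ₁ * Real.cos β := by
    simp [w, exp_ofReal_mul_I_re]
  have hcos : 0 < Real.cos β := Real.cos_pos_of_mem_Ioo hβ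
  have h := kH_ofReal_norm_add_log_le h0 (w := w) (by rw [hre]; positivity)
  rw [hnorm, hre, div_mul_cancel_left₀ h1.ne'] at h
  rw [one_div]
  linarith
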